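/- For all integers r ≥ 3, 1 ≤ ℓ ≤ r, and k ≥ r+1-ℓ, there exists a complete r-uniform (r,ℓ)-partite hypergraph with a spanning k-coloring of its edges such that the vertex set cannot be covered by ⌊(k-r+ℓ-1)/ℓ⌋ monochromatic components; i.e., cov(r,ℓ,k) ≥ 1 + ⌊(k-r+ℓ-1)/ℓ⌋. -/

import Mathlib

open Classical

variable {V : Type*}

/-- `e` is an edge of the complete `r`-uniform `r`-partite hypergraph with
partition `part`: it meets every class in exactly one vertex. -/
def IsPartiteEdge {r : ℕ} (part : V → Fin r) (e : Finset V) : Prop :=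
  ∀ i : Fin r, (e.filter fun v => part v = i).card = 1

/-- `e` is an edge of the complete `r`-uniform `(r,ℓ)`-partite hypergraph:
an `r`-set meeting every class in at most `ℓ` vertices. -/
def IsRLEdge {r : ℕ} (part : V → Fin r) (ℓ : ℕ) (e : Finset V) : Prop :=
  e.card = r ∧ ∀ i : Fin r, (e.filter fun v => part v = i).card ≤ ℓ

/-- An edge is friendly if it meets at most one class in exactly `ℓ` vertices. -/
def Friendly {r : ℕ} (part : V → Fin r) (ℓ : ℕ) (e : Finset V) : Prop :=
  (Finset.univ.filter fun i : Fin r => (e.filter fun v => part v = i).card = ℓ).card ≤ 1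

/-- `u` and `v` lie in the same monochromatic component of color `c` of the
hypergraph with edge predicate `E` and edge coloring `χ`. -/
def MonoConn {k : ℕ} (E : Finset V → Prop) (χ : Finset V → Fin k) (c : Fin k)
    (u v : V) : Prop :=
  Relation.ReflTransGen (fun a b => ∃ e : Finset V, E e ∧ χ e = c ∧ a ∈ e ∧ b ∈ e) u v

/-- The coloring `χ` is spanning: every vertex is incident with an edge of every color. -/
def Spanning {k : ℕ} (E : Finset V → Prop) (χ : Finset V → Fin k) : Prop :=
  ∀ v : V, ∀ c : Fin k, ∃ e : Finset V, E e ∧ χ e = c ∧ v ∈ e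

/-- The vertex set can be covered by at most `m` monochromatic components. -/
def CoversBy {k : ℕ} (E : Finset V → Prop) (χ : Finset V → Fin k) (m : ℕ) : Prop :=
  ∃ f : Fin m → Fin k × V, ∀ v : V, ∃ i : Fin m, MonoConn E χ (f i).1 (f i).2 v

/-- Hamming distance of the component vectors of two vertices: the number of
colors `c` for which they lie in different monochromatic components of color `c`. -/
noncomputable def HamDist {k : ℕ} (E : Finset V → Prop) (χ : Finset V → Fin k)
    (v w : V) : ℕ :=
  (Finset.univ.filter fun c : Fin k => ¬ MonoConn E χ c v w).card

/-!
The vertices of class `i` carry a vector `x : Fin k → Fin (m + 1)` (read as `0` when it has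
more than `m` nonzero entries for `i = 0`, more than one for `i ≠ 0`) and a tag in `Fin k`.
An edge meets at most `ℓ` vertices of class `0`, so at most `ℓ * m + (r - ℓ) < k` coordinates
are nonzero on it and some coordinate is constant on it. Each edge gets a color `c` whose
coordinate is constant on it, so the `c`-th coordinate is constant on each component of
color `c`. Given `m` components, a vertex of class `0` whose vector avoids the value of each
component in its color is covered by none of them. An edge is colored by its tag sum whenever
that color is constant on it; as one tag of an edge through a given vertex can be chosen
freely, every vertex sees every color.
-/

open Finset

theorem isRLEdge_image_of_section [DecidableEq V] {r ℓ : ℕ} (part : V → Fin r) (hℓ : 1 ≤ ℓ)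
    (F : Fin r → V) (hF : ∀ j, part (F j) = j) : IsRLEdge part ℓ (univ.image F) := by
  have hinj : Function.Injective F := Function.LeftInverse.injective hF
  refine ⟨by rw [card_image_of_injective _ hinj, card_univ, Fintype.card_fin], fun i => ?_⟩
  refine le_trans (card_le_one.2 ?_) hℓ
  simp only [mem_filter, mem_image, mem_univ, true_and]
  rintro _ ⟨⟨j, rfl⟩, hj⟩ _ ⟨⟨j', rfl⟩, hj'⟩
  rw [hF] at hj hj'
  rw [hj, hj']

namespace CovLowerBound

noncomputable def supp {ι β : Type*} [Fintype ι] [Zero β] (x : ι → β) : Finset ι :=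
  univ.filter fun c => x c ≠ 0

theorem exists_card_supp_le_avoiding {ι : Type*} [Fintype ι] {m : ℕ} (p : Fin m → ι × Fin (m + 1)) :
    ∃ g : ι → Fin (m + 1), #(supp g) ≤ m ∧ ∀ i, g (p i).1 ≠ (p i).2 := by
  set A : ι → Finset (Fin (m + 1)) := fun c =>
    (univ.filter fun i => (p i).1 = c).image fun i => (p i).2
  have hA : ∀ c, ∃ b, b ∉ A c := fun c => by
    obtain ⟨b, -, hb⟩ := exists_mem_notMem_of_card_lt_card (s := A c) (t := univ) (by
      calc #(A c) ≤ #(univ : Finset (Fin m)) :=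
            card_image_le.trans (card_le_card (filter_subset _ _))
        _ < #(univ : Finset (Fin (m + 1))) := by simp)
    exact ⟨b, hb⟩
  choose b hb using hA
  refine ⟨fun c => if 0 ∈ A c then b c else 0, ?_, fun i hi => ?_⟩
  · have hsub : supp (fun c => if 0 ∈ A c then b c else 0) ⊆ univ.image fun i => (p i).1 := by
      intro c hc
      have h0 : 0 ∈ A c := by
        by_contra h
        simp [supp, h] at hc
      obtain ⟨i, hi, -⟩ := mem_image.1 h0
      exact mem_image.2 ⟨i, mem_univ _, (mem_filter.1 hi).2⟩
    exact (card_le_card hsub).trans (card_image_le.trans (by simp))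
  · have hmem : (p i).2 ∈ A (p i).1 := mem_image.2 ⟨i, by simp, rfl⟩
    dsimp only at hi
    split_ifs at hi with h0
    · exact hb _ (hi ▸ hmem)
    · exact h0 (hi ▸ hmem)

variable {r k m ℓ : ℕ}

abbrev Vertex (r k m : ℕ) : Type := Fin r × (Fin k → Fin (m + 1)) × Fin k

section
variable [NeZero r]

def cap (m : ℕ) (i : Fin r) : ℕ := if i = 0 then m else 1

noncomputable def vec (v : Vertex r k m) : Fin k → Fin (m + 1) :=
  if #(supp v.2.1) ≤ cap m v.1 then v.2.1 else 0

theorem card_supp_vec_le (v : Vertex r k m) : #(supp (vec v)) ≤ cap m v.1 := by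
  unfold vec; split_ifs with h
  · exact h
  · simp [supp]

theorem vec_mk {i : Fin r} {x : Fin k → Fin (m + 1)} (t : Fin k) (hx : #(supp x) ≤ cap m i) :
    vec (i, x, t) = x := if_pos hx

theorem card_supp_single_le_cap (i : Fin r) (c : Fin k) (a : Fin (m + 1)) :
    #(supp (Pi.single c a)) ≤ cap m i := by
  rcases Nat.eq_zero_or_pos m with rfl | hm
  · simp [supp, Fin.fin_one_eq_zero a]
  · have hsub : supp (Pi.single c a) ⊆ {c} := fun c' hc' => by
      by_contra hne
      simp_all [supp, Pi.single_apply]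
    refine (card_le_card hsub).trans ?_
    rw [card_singleton]
    unfold cap; split_ifs <;> omega

theorem sum_cap_le {e : Finset (Vertex r k m)} (he : IsRLEdge Prod.fst ℓ e) (hm : 1 ≤ m) :
    ∑ v ∈ e, cap m v.1 ≤ ℓ * m + (r - ℓ) := by
  have hsplit : ∑ v ∈ e, cap m v.1
      = #(e.filter fun v => v.1 = 0) * m + #(e.filter fun v => ¬ v.1 = 0) := by
    simp only [cap, sum_ite, sum_const, smul_eq_mul, mul_one]
  have htot : #(e.filter fun v => v.1 = 0) + #(e.filter fun v => ¬ v.1 = 0) = r :=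
    (card_filter_add_card_filter_not _).trans he.1
  have h0 : #(e.filter fun v => v.1 = 0) ≤ ℓ := he.2 0
  rw [hsplit]
  generalize #(e.filter fun v => v.1 = 0) = a at *
  generalize #(e.filter fun v => ¬ v.1 = 0) = b at *
  obtain ⟨s, rfl⟩ := Nat.exists_eq_add_of_le h0
  have hs : s ≤ s * m := Nat.le_mul_of_pos_right s hm
  rw [add_mul]
  omega

noncomputable def constColors (e : Finset (Vertex r k m)) : Finset (Fin k) :=
  univ.filter fun c => ∀ u ∈ e, ∀ w ∈ e, vec u c = vec w c

theorem constColors_nonempty (hk : ℓ * m + (r - ℓ) < k) {e : Finset (Vertex r k m)}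
    (he : IsRLEdge Prod.fst ℓ e) : (constColors e).Nonempty := by
  rcases Nat.eq_zero_or_pos m with rfl | hm
  · exact ⟨⟨0, by omega⟩, by simp [constColors, Fin.fin_one_eq_zero]⟩
  have hS : #(e.biUnion fun v => supp (vec v)) < #(univ : Finset (Fin k)) :=
    calc #(e.biUnion fun v => supp (vec v)) ≤ ∑ v ∈ e, #(supp (vec v)) := card_biUnion_le
      _ ≤ ∑ v ∈ e, cap m v.1 := sum_le_sum fun v _ => card_supp_vec_le v
      _ ≤ ℓ * m + (r - ℓ) := sum_cap_le he hm
      _ < #(univ : Finset (Fin k)) := by simpa using hk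
  obtain ⟨c, -, hc⟩ := exists_mem_notMem_of_card_lt_card hS
  have hzero : ∀ u ∈ e, vec u c = 0 := fun u hu => by
    by_contra h
    exact hc (mem_biUnion.2 ⟨u, hu, by simpa [supp] using h⟩)
  exact ⟨c, mem_filter.2 ⟨mem_univ _, fun u hu w hw => by rw [hzero u hu, hzero w hw]⟩⟩

variable [NeZero k]

def tagSum (e : Finset (Vertex r k m)) : Fin k := ∑ v ∈ e, v.2.2

noncomputable def color (e : Finset (Vertex r k m)) : Fin k :=
  if tagSum e ∈ constColors e then tagSum e else Classical.epsilon (· ∈ constColors e)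

theorem color_mem_constColors {e : Finset (Vertex r k m)} (h : (constColors e).Nonempty) :
    color e ∈ constColors e := by
  unfold color
  split_ifs with ht
  · exact ht
  · exact Classical.epsilon_spec h

theorem vec_eq_of_monoConn (hk : ℓ * m + (r - ℓ) < k) {c : Fin k} {u w : Vertex r k m}
    (h : MonoConn (IsRLEdge Prod.fst ℓ) color c u w) : vec u c = vec w c := by
  induction h with
  | refl => rfl
  | tail _ hstep ih =>
    obtain ⟨e, he, rfl, ha, hb⟩ := hstep
    have hmem := color_mem_constColors (constColors_nonempty hk he)
    exact ih.trans ((mem_filter.1 hmem).2 _ ha _ hb)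

theorem not_coversBy (hk : ℓ * m + (r - ℓ) < k) :
    ¬ CoversBy (IsRLEdge Prod.fst ℓ) (color : Finset (Vertex r k m) → Fin k) m := by
  rintro ⟨f, hf⟩
  obtain ⟨g, hg, hgf⟩ := exists_card_supp_le_avoiding fun i => ((f i).1, vec (f i).2 (f i).1)
  obtain ⟨i, hi⟩ := hf (0, g, 0)
  have hvec := vec_eq_of_monoConn hk hi
  rw [vec_mk (i := 0) _ (by simpa [cap] using hg)] at hvec
  exact hgf i hvec.symm

theorem spanning_color (hr : 2 ≤ r) (hℓ : 1 ≤ ℓ) :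
    Spanning (IsRLEdge Prod.fst ℓ) (color : Finset (Vertex r k m) → Fin k) := by
  intro v c
  have : Nontrivial (Fin r) := Fin.nontrivial_iff_two_le.2 hr
  obtain ⟨j0, hj0⟩ := exists_ne v.1
  let F : Fin r → Vertex r k m := fun j =>
    if j = v.1 then v else (j, Pi.single c (vec v c), (Pi.single j0 (c - v.2.2) : Fin r → Fin k) j)
  have hF : ∀ j, (F j).1 = j := fun j => by
    dsimp only [F]
    split_ifs with h
    exacts [h.symm, rfl]
  have hvecF : ∀ j, vec (F j) c = vec v c := fun j => by
    dsimp only [F]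
    split_ifs
    · rfl
    · rw [vec_mk _ (card_supp_single_le_cap _ _ _), Pi.single_eq_same]
  have hconst : c ∈ constColors (univ.image F) := by
    simp only [constColors, mem_filter, mem_univ, true_and, mem_image]
    rintro _ ⟨j, -, rfl⟩ _ ⟨j', -, rfl⟩
    rw [hvecF, hvecF]
  have htag : tagSum (univ.image F) = c := by
    rw [tagSum, sum_image fun x _ y _ h => (Function.LeftInverse.injective hF) h,
      Fintype.sum_eq_add v.1 j0 hj0.symm fun j hj => by simp [F, hj.1, hj.2]]
    simp [F, hj0]
  refine ⟨univ.image F, isRLEdge_image_of_section _ hℓ F hF, ?_, mem_image.2 ⟨v.1, by simp [F]⟩⟩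
  rw [color, htag, if_pos (htag ▸ hconst)]

end

end CovLowerBound

theorem stmt_13 (r ℓ k : ℕ) (hr : 3 ≤ r) (hℓ1 : 1 ≤ ℓ) (hℓr : ℓ ≤ r)
    (hk : r + 1 - ℓ ≤ k) :
    ∃ (V : Type) (_ : Fintype V) (part : V → Fin r) (χ : Finset V → Fin k),
      (∀ i : Fin r, ∃ v, part v = i) ∧ Spanning (IsRLEdge part ℓ) χ ∧
      ¬ CoversBy (IsRLEdge part ℓ) χ ((k + ℓ - r - 1) / ℓ) := by
  have hm : ℓ * ((k + ℓ - r - 1) / ℓ) + (r - ℓ) < k := by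
    have := Nat.div_mul_le_self (k + ℓ - r - 1) ℓ
    rw [mul_comm]
    omega
  have : NeZero r := ⟨by omega⟩
  have : NeZero k := ⟨by omega⟩
  exact ⟨CovLowerBound.Vertex r k _, inferInstance, Prod.fst, CovLowerBound.color,
    fun i => ⟨(i, 0, 0), rfl⟩, CovLowerBound.spanning_color (by omega) hℓ1,
    CovLowerBound.not_coversBy hm⟩
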